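/- Let ν be a Lévy measure on ℝⁿ, and suppose there exist x₀ ∈ ℝⁿ, δ > 0 with |x₀| ≥ δ, and b ∈ ℝⁿ such that the restriction of ν to B_δ(x₀) has density e^{b·y} with respect to Lebesgue measure. Then there exists a smooth compactly supported function φ : ℝⁿ → ℝ with φ ≠ 0, supp φ ⊆ B_{δ/2}(x₀) (in particular φ = 0 on B_{δ/2}(0)), such that ∫_{ℝⁿ} φ(x+y) ν(dy) = 0 for every x with |x| < δ/2. Hence the Lévy operator with Lévy measure ν fails the unique continuation principle. -/

import Mathlib

/-!
On `B_δ(x₀)` the measure `ν` is `e^{⟪b, y⟫} dy`, and for `‖x‖ < δ/2` the translate `φ (x + ·)` of a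
function supported in `B_{δ/2}(x₀)` is supported in `B_δ(x₀)`. Translation invariance of Lebesgue
measure then gives `∫ φ (x + y) ν(dy) = e^{-⟪b, x⟫} ∫ φ(z) e^{⟪b, z⟫} dz`, so it suffices that `φ` is
orthogonal to the weight `e^{⟪b, ·⟫}`. Such a `φ` is `I₁ ψ₀ - I₀ ψ₁` for two bumps `ψ₀, ψ₁` in
`B_{δ/2}(x₀)` with disjoint supports and positive weighted integrals `I₀, I₁`; it is nonzero at the
centre of `ψ₀`, and `|x₀| ≥ δ` keeps it away from `B_{δ/2}(0)`.
-/

open MeasureTheory Metric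

section WeightedCancellation

variable {E : Type*} [NormedAddCommGroup E] [NormedSpace ℝ E] [FiniteDimensional ℝ E]
  [MeasurableSpace E] [BorelSpace E] (μ : Measure E) [μ.IsOpenPosMeasure]
  [IsFiniteMeasureOnCompacts μ] {w : E → ℝ}

theorem ContDiffBump.integral_mul_pos (hw : Continuous w) (hw_pos : ∀ z, 0 < w z) {c : E}
    (f : ContDiffBump c) : 0 < ∫ z, w z * f z ∂μ :=
  (hw.mul f.continuous).integral_pos_of_hasCompactSupport_nonneg_nonzero (x := c)
    f.hasCompactSupport.mul_left (fun z => mul_nonneg (hw_pos z).le f.nonneg)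
    (mul_pos (hw_pos c) (f.pos_of_mem_ball (mem_ball_self f.rOut_pos))).ne'

theorem exists_contDiff_tsupport_subset_ball_integral_mul_eq_zero [Nontrivial E]
    (hw : Continuous w) (hw_pos : ∀ z, 0 < w z) (x₀ : E) {r : ℝ} (hr : 0 < r) :
    ∃ φ : E → ℝ, ContDiff ℝ (⊤ : ℕ∞) φ ∧ HasCompactSupport φ ∧ φ ≠ 0 ∧
      tsupport φ ⊆ ball x₀ r ∧ ∫ z, w z * φ z ∂μ = 0 := by
  obtain ⟨v, hv⟩ := exists_norm_eq E (half_pos hr).le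
  let ψ₀ : ContDiffBump x₀ := ⟨r / 8, r / 4, by linarith, by linarith⟩
  let ψ₁ : ContDiffBump (x₀ + v) := ⟨r / 8, r / 4, by linarith, by linarith⟩
  set I₀ := ∫ z, w z * ψ₀ z ∂μ
  set I₁ := ∫ z, w z * ψ₁ z ∂μ
  refine ⟨fun z => I₁ * ψ₀ z - I₀ * ψ₁ z,
    (contDiff_const.mul ψ₀.contDiff).sub (contDiff_const.mul ψ₁.contDiff),
    ψ₀.hasCompactSupport.mul_left.sub ψ₁.hasCompactSupport.mul_left, ?_, ?_, ?_⟩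
  · have hψ₁ : ψ₁ x₀ = 0 :=
      ψ₁.zero_of_le_dist (by rw [dist_self_add_right, hv]; show r / 4 ≤ r / 2; linarith)
    refine Function.ne_iff.2 ⟨x₀, ?_⟩
    simpa [hψ₁] using (mul_pos (ψ₁.integral_mul_pos μ hw hw_pos)
      (ψ₀.pos_of_mem_ball (mem_ball_self ψ₀.rOut_pos))).ne'
  · have hsupp : Function.support (fun z => I₁ * ψ₀ z - I₀ * ψ₁ z) ⊆
        closedBall x₀ (r / 4) ∪ closedBall (x₀ + v) (r / 4) := by
      refine (Function.support_sub _ _).trans (Set.union_subset_union ?_ ?_)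
      · exact (Function.support_mul_subset_right _ _).trans
          (ψ₀.support_eq.trans_subset ball_subset_closedBall)
      · exact (Function.support_mul_subset_right _ _).trans
          (ψ₁.support_eq.trans_subset ball_subset_closedBall)
    refine (closure_minimal hsupp (isClosed_closedBall.union isClosed_closedBall)).trans
      (Set.union_subset (closedBall_subset_ball (by linarith)) (closedBall_subset_ball' ?_))
    rw [dist_self_add_left, hv]
    linarith
  · have hint : ∀ {c : E} (ψ : ContDiffBump c), Integrable (fun z => w z * ψ z) μ := fun ψ =>
      (hw.mul ψ.continuous).integrable_of_hasCompactSupport ψ.hasCompactSupport.mul_left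
    have h : (fun z => w z * (I₁ * ψ₀ z - I₀ * ψ₁ z))
        = fun z => I₁ * (w z * ψ₀ z) - I₀ * (w z * ψ₁ z) := by
      funext z; ring
    rw [h, integral_sub ((hint ψ₀).const_mul _) ((hint ψ₁).const_mul _), integral_const_mul,
      integral_const_mul]
    ring

end WeightedCancellation

theorem integral_eq_of_restrict_eq_of_forall_notMem_eq_zero {X F : Type*} [MeasurableSpace X]
    [NormedAddCommGroup F] [NormedSpace ℝ F] {μ ν : Measure X} {s : Set X}
    (hμν : μ.restrict s = ν.restrict s) {f : X → F} (hf : ∀ x ∉ s, f x = 0) :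
    ∫ x, f x ∂μ = ∫ x, f x ∂ν := by
  rw [← setIntegral_eq_integral_of_forall_compl_eq_zero hf, hμν,
    setIntegral_eq_integral_of_forall_compl_eq_zero hf]

theorem integral_withDensity_ofReal_eq_integral_mul {X : Type*} [MeasurableSpace X]
    {μ : Measure X} {w : X → ℝ} (hw : Measurable w) (hw_nonneg : ∀ x, 0 ≤ w x) (f : X → ℝ) :
    ∫ x, f x ∂μ.withDensity (fun x => ENNReal.ofReal (w x)) = ∫ x, w x * f x ∂μ := by
  simp only [integral_withDensity_eq_integral_toReal_smul hw.ennreal_ofReal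
    (ae_of_all _ fun _ => ENNReal.ofReal_lt_top), ENNReal.toReal_ofReal (hw_nonneg _), smul_eq_mul]

section ExponentialWeight

variable {E : Type*} [NormedAddCommGroup E] [InnerProductSpace ℝ E] [MeasurableSpace E]
  [BorelSpace E] (μ : Measure E) [μ.IsAddLeftInvariant]

theorem integral_exp_inner_mul_comp_add_left (b x : E) (φ : E → ℝ) :
    ∫ y, Real.exp (inner ℝ b y) * φ (x + y) ∂μ =
      Real.exp (-inner ℝ b x) * ∫ z, Real.exp (inner ℝ b z) * φ z ∂μ := by
  rw [← integral_const_mul,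
    ← integral_add_left_eq_self (fun z => Real.exp (-inner ℝ b x) * (Real.exp (inner ℝ b z) * φ z)) x]
  congr 1 with y
  rw [inner_add_right, Real.exp_add, ← mul_assoc, ← mul_assoc, ← Real.exp_add,
    neg_add_cancel, Real.exp_zero, one_mul]

end ExponentialWeight

theorem apply_add_eq_zero_of_tsupport_subset_ball {E F : Type*} [SeminormedAddCommGroup E]
    [Zero F] {φ : E → F} {c x y : E} {r s : ℝ} (hφ : tsupport φ ⊆ ball c r) (hx : ‖x‖ < s)
    (hy : y ∉ ball c (r + s)) : φ (x + y) = 0 := by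
  refine image_eq_zero_of_notMem_tsupport fun h => hy ?_
  calc dist y c ≤ dist y (y + x) + dist (y + x) c := dist_triangle _ _ _
    _ < s + r := by rw [dist_self_add_right, add_comm y]; exact add_lt_add hx (hφ h)
    _ = r + s := add_comm s r

theorem levy_exponential_density_ucp_fails_general
    (n : ℕ) (ν : Measure (EuclideanSpace ℝ (Fin n)))
    (x₀ : EuclideanSpace ℝ (Fin n)) (δ : ℝ) (hδ : 0 < δ) (hx₀ : δ ≤ ‖x₀‖)
    (b : EuclideanSpace ℝ (Fin n))
    (hdens : ν.restrict (ball x₀ δ) =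
      (volume.withDensity
        (fun y => ENNReal.ofReal (Real.exp (inner ℝ b y : ℝ)))).restrict (ball x₀ δ)) :
    ∃ φ : EuclideanSpace ℝ (Fin n) → ℝ,
      ContDiff ℝ (⊤ : ℕ∞) φ ∧ HasCompactSupport φ ∧ φ ≠ 0 ∧
      tsupport φ ⊆ ball x₀ (δ / 2) ∧
      (∀ z ∈ ball (0 : EuclideanSpace ℝ (Fin n)) (δ / 2), φ z = 0) ∧
      ∀ x : EuclideanSpace ℝ (Fin n), ‖x‖ < δ / 2 → ∫ y, φ (x + y) ∂ν = 0 := by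
  have : Nontrivial (EuclideanSpace ℝ (Fin n)) :=
    nontrivial_of_ne x₀ 0 (norm_pos_iff.1 (hδ.trans_le hx₀))
  have hw : Continuous fun z : EuclideanSpace ℝ (Fin n) => Real.exp (inner ℝ b z) := by fun_prop
  obtain ⟨φ, hφ_smooth, hφ_compact, hφ_ne, hφ_supp, hφ_int⟩ :=
    exists_contDiff_tsupport_subset_ball_integral_mul_eq_zero volume hw
      (fun z => Real.exp_pos _) x₀ (half_pos hδ)
  refine ⟨φ, hφ_smooth, hφ_compact, hφ_ne, hφ_supp, fun z hz => ?_, fun x hx => ?_⟩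
  · have hdisj : Disjoint (ball x₀ (δ / 2)) (ball 0 (δ / 2)) :=
      ball_disjoint_ball (by rw [dist_zero_right]; linarith)
    exact image_eq_zero_of_notMem_tsupport fun h => Set.disjoint_left.1 hdisj (hφ_supp h) hz
  · have hvanish : ∀ y ∉ ball x₀ δ, φ (x + y) = 0 := fun y hy =>
      apply_add_eq_zero_of_tsupport_subset_ball hφ_supp hx (by rwa [add_halves])
    rw [integral_eq_of_restrict_eq_of_forall_notMem_eq_zero hdens hvanish,
      integral_withDensity_ofReal_eq_integral_mul hw.measurable (fun _ => (Real.exp_pos _).le),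
      integral_exp_inner_mul_comp_add_left, hφ_int, mul_zero]

/-- If the Lévy measure `ν` has density `e^{b·y}` w.r.t. Lebesgue measure on some ball
`B_δ(x₀)` with `|x₀| ≥ δ`, then there is a nonzero smooth compactly supported `φ` with
support in `B_{δ/2}(x₀)` (in particular `φ = 0` on `B_{δ/2}(0)`) such that
`∫ φ(x+y) ν(dy) = 0` for all `|x| < δ/2`: the Lévy operator with Lévy measure `ν` fails
the unique continuation principle. -/
theorem levy_exponential_density_ucp_fails
    (n : ℕ) (ν : Measure (EuclideanSpace ℝ (Fin n)))
    (hν0 : ν {0} = 0)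
    (hνint : ∫⁻ y : EuclideanSpace ℝ (Fin n), ENNReal.ofReal (min 1 (‖y‖ ^ 2)) ∂ν < ⊤)
    (x₀ : EuclideanSpace ℝ (Fin n)) (δ : ℝ) (hδ : 0 < δ) (hx₀ : δ ≤ ‖x₀‖)
    (b : EuclideanSpace ℝ (Fin n))
    (hdens : ν.restrict (ball x₀ δ) =
      (volume.withDensity
        (fun y => ENNReal.ofReal (Real.exp (inner ℝ b y : ℝ)))).restrict (ball x₀ δ)) :
    ∃ φ : EuclideanSpace ℝ (Fin n) → ℝ,
      ContDiff ℝ (⊤ : ℕ∞) φ ∧ HasCompactSupport φ ∧ φ ≠ 0 ∧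
      tsupport φ ⊆ ball x₀ (δ / 2) ∧
      (∀ z ∈ ball (0 : EuclideanSpace ℝ (Fin n)) (δ / 2), φ z = 0) ∧
      ∀ x : EuclideanSpace ℝ (Fin n), ‖x‖ < δ / 2 → ∫ y, φ (x + y) ∂ν = 0 :=
  levy_exponential_density_ucp_fails_general n ν x₀ δ hδ hx₀ b hdens
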